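/- For transition relations between tau-stable equivalence-class representatives: let P be a strongly guarded process, [P] its concrete-branching-reactive-bisimilarity equivalence class considered as a state with the class transition relation. Then for all α ∈ A ∪ {tau}: [P] -α-> R' iff there exists a path P ==> P1 -α-> P2 with P1 ∈ [P], P2 ∈ R', and (α ∈ A or [P] ≠ R'). Moreover [P] has no tau-transition iff there is a path P ==> P0 with P0 ∈ [P] and P0 having no tau-transition. -/

import Mathlib

inductive Act (A : Type) where
  | vis (a : A)
  | tau
  | to

def TauPath {S A : Type} (Tr : S → Act A → S → Prop) : S → S → Prop :=
  Relation.ReflTransGen (fun p q => Tr p Act.tau q)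

def OptStep {S A : Type} (Tr : S → Act A → S → Prop) (α : Act A) (p q : S) : Prop :=
  (α = Act.tau ∧ p = q) ∨ Tr p α q

def Stable {S A : Type} (Tr : S → Act A → S → Prop) (p : S) : Prop :=
  ¬ ∃ p', Tr p Act.tau p'

def Idle {S A : Type} (Tr : S → Act A → S → Prop) (p : S) (X : Set A) : Prop :=
  Stable Tr p ∧ ∀ a ∈ X, ¬ ∃ p', Tr p (Act.vis a) p'

def InitSet {S A : Type} (Tr : S → Act A → S → Prop) (p : S) : Set (Act A) :=
  {α | α ≠ Act.to ∧ ∃ p', Tr p α p'}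

structure CBRB {S A : Type} (Tr : S → Act A → S → Prop)
    (Rp : S → S → Prop) (Rt : S → Set A → S → Prop) : Prop where
  symm_p : ∀ {P Q}, Rp P Q → Rp Q P
  symm_t : ∀ {P X Q}, Rt P X Q → Rt Q X P
  c1a : ∀ {P Q α P'}, Rp P Q → α ≠ Act.to → Tr P α P' →
    ∃ Q1 Q2, TauPath Tr Q Q1 ∧ OptStep Tr α Q1 Q2 ∧ Rp P Q1 ∧ Rp P' Q2
  c1b : ∀ {P Q} (Y : Set A), Rp P Q → Rt P Y Q
  c2a : ∀ {P X Q P'}, Rt P X Q → Tr P Act.tau P' →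
    ∃ Q1 Q2, TauPath Tr Q Q1 ∧ OptStep Tr Act.tau Q1 Q2 ∧ Rt P X Q1 ∧ Rt P' X Q2
  c2b : ∀ {P X Q a P'}, Rt P X Q → a ∈ X → Tr P (Act.vis a) P' →
    ∃ Q1 Q2, TauPath Tr Q Q1 ∧ Tr Q1 (Act.vis a) Q2 ∧ Rt P X Q1 ∧ Rp P' Q2
  c2c : ∀ {P X Q}, Rt P X Q → Idle Tr P X → ∃ Q0, TauPath Tr Q Q0 ∧ Rp P Q0
  c2d : ∀ {P X Q P'}, Rt P X Q → Idle Tr P X → Tr P Act.to P' →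
    ∃ Q1 Q2, TauPath Tr Q Q1 ∧ Tr Q1 Act.to Q2 ∧ Rt P' X Q2
  c2e : ∀ {P X Q}, Rt P X Q → Stable Tr P → ∃ Q0, TauPath Tr Q Q0 ∧ Stable Tr Q0

def Bis {S A : Type} (Tr : S → Act A → S → Prop) (P Q : S) : Prop :=
  ∃ Rp Rt, CBRB Tr Rp Rt ∧ Rp P Q

def BisX {S A : Type} (Tr : S → Act A → S → Prop) (P : S) (X : Set A) (Q : S) : Prop :=
  ∃ Rp Rt, CBRB Tr Rp Rt ∧ Rt P X Q

/-- Strong guardedness: no infinite sequences of tau-transitions. -/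
def StronglyGuarded {C A : Type} (Tr : C → Act A → C → Prop) : Prop :=
  ¬ ∃ f : ℕ → C, ∀ n, Tr (f n) Act.tau (f (n + 1))

/-- The equivalence class of `P` under concrete branching reactive bisimilarity. -/
def cls {C A : Type} (Tr : C → Act A → C → Prop) (P : C) : Set C :=
  {Q | Bis Tr P Q}

/-- `R` is a `~`-equivalence class. -/
def IsClass {C A : Type} (Tr : C → Act A → C → Prop) (R : Set C) : Prop :=
  ∃ P, R = cls Tr P

/-- The transition relation between equivalence classes, relative to a choice
function `χ` of representatives. -/
def ClTr {C A : Type} (Tr : C → Act A → C → Prop) (χ : Set C → C)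
    (R : Set C) (α : Act A) (R' : Set C) : Prop :=
  match α with
  | Act.to =>
      ∃ P1 P2, TauPath Tr (χ R) P1 ∧ Tr P1 Act.to P2 ∧ P1 ∈ R ∧ Stable Tr P1 ∧ P2 ∈ R'
  | _ =>
      ∃ P1 P2, TauPath Tr (χ R) P1 ∧ Tr P1 α P2 ∧ P1 ∈ R ∧ P2 ∈ R' ∧
        ((∃ a, α = Act.vis a) ∨ R ≠ R')

/-!
Concrete branching reactive bisimilarity is an equivalence: the relational composite of the
largest bisimulation with itself is again a bisimulation. The only delicate clauses are those
for idle and stable states, where strong guardedness lets the middle process run along a finite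
tau-path to an idle (stable) state of its own. Whether a class can perform an `α`-step, via a
tau-path ending in a step that is visible or leaves the class, does not change when the
starting process is replaced by a bisimilar one, so starting from `χ [P]` or from `P` makes
no difference. A stable member of `[P]` answers every tau-step of a member of `[P]` by idling,
so no tau-step leaves `[P]`; conversely, when no tau-step leaves `[P]`, the tau-paths from `P`
stay in `[P]` and by strong guardedness end in a stable state.
-/

section

variable {C A : Type} {Tr : C → Act A → C → Prop}

theorem Act.tau_ne_to : (Act.tau : Act A) ≠ Act.to := nofun

theorem Act.vis_ne_to (a : A) : Act.vis a ≠ Act.to := nofun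

theorem TauPath.eq_of_stable {M N : C} (h : TauPath Tr M N) (hM : Stable Tr M) : N = M := by
  rcases Relation.ReflTransGen.cases_head h with rfl | ⟨M', hM', -⟩
  · rfl
  · exact absurd ⟨M', hM'⟩ hM

theorem OptStep.tauPath {p q : C} (h : OptStep Tr Act.tau p q) : TauPath Tr p q := by
  rcases h with ⟨-, rfl⟩ | h
  · exact .refl
  · exact .single h

theorem StronglyGuarded.wellFounded (hsg : StronglyGuarded Tr) :
    WellFounded (fun q p : C => Tr p Act.tau q) :=
  wellFounded_iff_isEmpty_descending_chain.mpr ⟨fun ⟨f, hf⟩ => hsg ⟨f, hf⟩⟩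

theorem StronglyGuarded.exists_tauPath_stable (hsg : StronglyGuarded Tr) {R : Set C}
    (hR : ∀ Q ∈ R, ∀ Q', Tr Q Act.tau Q' → Q' ∈ R) {S : C} (hS : S ∈ R) :
    ∃ P0, TauPath Tr S P0 ∧ P0 ∈ R ∧ Stable Tr P0 := by
  induction S using hsg.wellFounded.induction with
  | _ S ih =>
    by_cases hst : Stable Tr S
    · exact ⟨S, .refl, hS, hst⟩
    obtain ⟨S', hS'⟩ := not_not.mp hst
    obtain ⟨P0, hP0, hmem, hst0⟩ := ih S' hS' (hR S hS S' hS')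
    exact ⟨P0, .head hS' hP0, hmem, hst0⟩

namespace CBRB

variable {Rp : C → C → Prop} {Rt : C → Set A → C → Prop}

theorem exists_tauPath_rp (hR : CBRB Tr Rp Rt) {P Q P' : C} (h : Rp P Q)
    (hP : TauPath Tr P P') : ∃ Q', TauPath Tr Q Q' ∧ Rp P' Q' := by
  induction hP with
  | refl => exact ⟨Q, .refl, h⟩
  | tail _ hstep ih =>
    obtain ⟨Q1, hQ1, h1⟩ := ih
    obtain ⟨Q2, Q3, hQ2, hQ3, -, h3⟩ := hR.c1a h1 Act.tau_ne_to hstep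
    exact ⟨Q3, hQ1.trans (hQ2.trans hQ3.tauPath), h3⟩

theorem exists_tauPath_rt (hR : CBRB Tr Rp Rt) {P Q P' : C} {X : Set A} (h : Rt P X Q)
    (hP : TauPath Tr P P') : ∃ Q', TauPath Tr Q Q' ∧ Rt P' X Q' := by
  induction hP with
  | refl => exact ⟨Q, .refl, h⟩
  | tail _ hstep ih =>
    obtain ⟨Q1, hQ1, h1⟩ := ih
    obtain ⟨Q2, Q3, hQ2, hQ3, -, h3⟩ := hR.c2a h1 hstep
    exact ⟨Q3, hQ1.trans (hQ2.trans hQ3.tauPath), h3⟩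

theorem exists_optStep_of_stable (hR : CBRB Tr Rp Rt) {M P M' : C} {α : Act A}
    (h : Rp M P) (hP : Stable Tr P) (hα : α ≠ Act.to) (hstep : Tr M α M') :
    ∃ P', OptStep Tr α P P' ∧ Rp M' P' := by
  obtain ⟨P1, P', hP1, hP', -, h'⟩ := hR.c1a h hα hstep
  obtain rfl := hP1.eq_of_stable hP
  exact ⟨P', hP', h'⟩

theorem rp_of_tau_of_stable (hR : CBRB Tr Rp Rt) {M P M' : C} (h : Rp M P)
    (hP : Stable Tr P) (hstep : Tr M Act.tau M') : Rp M' P := by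
  obtain ⟨P', ⟨-, rfl⟩ | hP', h'⟩ := hR.exists_optStep_of_stable h hP Act.tau_ne_to hstep
  · exact h'
  · exact absurd ⟨P', hP'⟩ hP

theorem exists_stable (hR : CBRB Tr Rp Rt) (hsg : StronglyGuarded Tr) {P M : C}
    (h : Rp P M) (hP : Stable Tr P) : ∃ M', TauPath Tr M M' ∧ Rp P M' ∧ Stable Tr M' := by
  induction M using hsg.wellFounded.induction with
  | _ M ih =>
    by_cases hM : Stable Tr M
    · exact ⟨M, .refl, h, hM⟩
    obtain ⟨M1, hM1⟩ := not_not.mp hM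
    obtain ⟨M', hM', h', hst⟩ :=
      ih M1 hM1 (hR.symm_p (hR.rp_of_tau_of_stable (hR.symm_p h) hP hM1))
    exact ⟨M', .head hM1 hM', h', hst⟩

theorem exists_idle (hR : CBRB Tr Rp Rt) (hsg : StronglyGuarded Tr) {P M : C} {X : Set A}
    (h : Rp P M) (hP : Idle Tr P X) : ∃ M', TauPath Tr M M' ∧ Rp P M' ∧ Idle Tr M' X := by
  obtain ⟨M', hM', h', hst⟩ := hR.exists_stable hsg h hP.1
  refine ⟨M', hM', h', hst, fun a ha ⟨M'', hstep⟩ => ?_⟩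
  obtain ⟨P', ⟨hvis, -⟩ | hP', -⟩ := hR.exists_optStep_of_stable (hR.symm_p h') hP.1
    (Act.vis_ne_to a) hstep
  · exact nomatch hvis
  · exact hP.2 a ha ⟨P', hP'⟩

theorem exists_idle_of_rt (hR : CBRB Tr Rp Rt) (hsg : StronglyGuarded Tr) {P M : C}
    {X : Set A} (h : Rt P X M) (hP : Idle Tr P X) :
    ∃ M', TauPath Tr M M' ∧ Rp P M' ∧ Idle Tr M' X := by
  obtain ⟨M0, hM0, h0⟩ := hR.c2c h hP
  obtain ⟨M', hM', h', hidle⟩ := hR.exists_idle hsg h0 hP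
  exact ⟨M', hM0.trans hM', h', hidle⟩

theorem comp_self (hR : CBRB Tr Rp Rt) (hsg : StronglyGuarded Tr) :
    CBRB Tr (fun P Q => ∃ M, Rp P M ∧ Rp M Q) (fun P X Q => ∃ M, Rt P X M ∧ Rt M X Q) where
  symm_p := fun ⟨M, h1, h2⟩ => ⟨M, hR.symm_p h2, hR.symm_p h1⟩
  symm_t := fun ⟨M, h1, h2⟩ => ⟨M, hR.symm_t h2, hR.symm_t h1⟩
  c1a := by
    rintro P Q α P' ⟨M, hPM, hMQ⟩ hα hstep
    obtain ⟨M1, M2, hM1, hM2, hPM1, hPM2⟩ := hR.c1a hPM hα hstep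
    obtain ⟨Q1, hQ1, hMQ1⟩ := hR.exists_tauPath_rp hMQ hM1
    rcases hM2 with ⟨hτ, rfl⟩ | hM2
    · exact ⟨Q1, Q1, hQ1, .inl ⟨hτ, rfl⟩, ⟨M1, hPM1, hMQ1⟩, ⟨M1, hPM2, hMQ1⟩⟩
    · obtain ⟨Q2, Q3, hQ2, hQ3, hMQ2, hMQ3⟩ := hR.c1a hMQ1 hα hM2
      exact ⟨Q2, Q3, hQ1.trans hQ2, hQ3, ⟨M1, hPM1, hMQ2⟩, ⟨M2, hPM2, hMQ3⟩⟩
  c1b Y := fun ⟨M, h1, h2⟩ => ⟨M, hR.c1b Y h1, hR.c1b Y h2⟩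
  c2a := by
    rintro P X Q P' ⟨M, hPM, hMQ⟩ hstep
    obtain ⟨M1, M2, hM1, hM2, hPM1, hPM2⟩ := hR.c2a hPM hstep
    obtain ⟨Q1, hQ1, hMQ1⟩ := hR.exists_tauPath_rt hMQ hM1
    rcases hM2 with ⟨-, rfl⟩ | hM2
    · exact ⟨Q1, Q1, hQ1, .inl ⟨rfl, rfl⟩, ⟨M1, hPM1, hMQ1⟩, ⟨M1, hPM2, hMQ1⟩⟩
    · obtain ⟨Q2, Q3, hQ2, hQ3, hMQ2, hMQ3⟩ := hR.c2a hMQ1 hM2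
      exact ⟨Q2, Q3, hQ1.trans hQ2, hQ3, ⟨M1, hPM1, hMQ2⟩, ⟨M2, hPM2, hMQ3⟩⟩
  c2b := by
    rintro P X Q a P' ⟨M, hPM, hMQ⟩ ha hstep
    obtain ⟨M1, M2, hM1, hM2, hPM1, hPM2⟩ := hR.c2b hPM ha hstep
    obtain ⟨Q1, hQ1, hMQ1⟩ := hR.exists_tauPath_rt hMQ hM1
    obtain ⟨Q2, Q3, hQ2, hQ3, hMQ2, hMQ3⟩ := hR.c2b hMQ1 ha hM2
    exact ⟨Q2, Q3, hQ1.trans hQ2, hQ3, ⟨M1, hPM1, hMQ2⟩, ⟨M2, hPM2, hMQ3⟩⟩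
  c2c := by
    rintro P X Q ⟨M, hPM, hMQ⟩ hP
    obtain ⟨M1, hM1, hPM1, hidle⟩ := hR.exists_idle_of_rt hsg hPM hP
    obtain ⟨Q1, hQ1, hMQ1⟩ := hR.exists_tauPath_rt hMQ hM1
    obtain ⟨Q0, hQ0, hMQ0⟩ := hR.c2c hMQ1 hidle
    exact ⟨Q0, hQ1.trans hQ0, M1, hPM1, hMQ0⟩
  c2d := by
    rintro P X Q P' ⟨M, hPM, hMQ⟩ hP hstep
    obtain ⟨M1, hM1, hPM1, hidle⟩ := hR.exists_idle_of_rt hsg hPM hP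
    obtain ⟨M2, M3, hM2, hM3, hPM3⟩ := hR.c2d (hR.c1b X hPM1) hP hstep
    obtain rfl := hM2.eq_of_stable hidle.1
    obtain ⟨Q1, hQ1, hMQ1⟩ := hR.exists_tauPath_rt hMQ hM1
    obtain ⟨Q2, Q3, hQ2, hQ3, hMQ3⟩ := hR.c2d hMQ1 hidle hM3
    exact ⟨Q2, Q3, hQ1.trans hQ2, hQ3, M3, hPM3, hMQ3⟩
  c2e := by
    rintro P X Q ⟨M, hPM, hMQ⟩ hP
    obtain ⟨M0, hM0, hst⟩ := hR.c2e hPM hP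
    obtain ⟨Q1, hQ1, hMQ1⟩ := hR.exists_tauPath_rt hMQ hM0
    obtain ⟨Q0, hQ0, hst'⟩ := hR.c2e hMQ1 hst
    exact ⟨Q0, hQ1.trans hQ0, hst'⟩

end CBRB

theorem cbrb_eq : CBRB Tr Eq (fun P (_ : Set A) Q => P = Q) where
  symm_p := Eq.symm
  symm_t := Eq.symm
  c1a := by
    rintro P _ α P' rfl - hstep
    exact ⟨P, P', .refl, .inr hstep, rfl, rfl⟩
  c1b _ := id
  c2a := by
    rintro P X _ P' rfl hstep
    exact ⟨P, P', .refl, .inr hstep, rfl, rfl⟩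
  c2b := by
    rintro P X _ a P' rfl - hstep
    exact ⟨P, P', .refl, hstep, rfl, rfl⟩
  c2c := by
    rintro P X _ rfl -
    exact ⟨P, .refl, rfl⟩
  c2d := by
    rintro P X _ P' rfl - hstep
    exact ⟨P, P', .refl, hstep, rfl⟩
  c2e := by
    rintro P X _ rfl hP
    exact ⟨P, .refl, hP⟩

theorem cbrb_bis : CBRB Tr (Bis Tr) (BisX Tr) where
  symm_p := fun ⟨Rp, Rt, hR, h⟩ => ⟨Rp, Rt, hR, hR.symm_p h⟩
  symm_t := fun ⟨Rp, Rt, hR, h⟩ => ⟨Rp, Rt, hR, hR.symm_t h⟩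
  c1a := fun ⟨Rp, Rt, hR, h⟩ hα hstep =>
    let ⟨Q1, Q2, hQ1, hQ2, h1, h2⟩ := hR.c1a h hα hstep
    ⟨Q1, Q2, hQ1, hQ2, ⟨Rp, Rt, hR, h1⟩, ⟨Rp, Rt, hR, h2⟩⟩
  c1b Y := fun ⟨Rp, Rt, hR, h⟩ => ⟨Rp, Rt, hR, hR.c1b Y h⟩
  c2a := fun ⟨Rp, Rt, hR, h⟩ hstep =>
    let ⟨Q1, Q2, hQ1, hQ2, h1, h2⟩ := hR.c2a h hstep
    ⟨Q1, Q2, hQ1, hQ2, ⟨Rp, Rt, hR, h1⟩, ⟨Rp, Rt, hR, h2⟩⟩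
  c2b := fun ⟨Rp, Rt, hR, h⟩ ha hstep =>
    let ⟨Q1, Q2, hQ1, hQ2, h1, h2⟩ := hR.c2b h ha hstep
    ⟨Q1, Q2, hQ1, hQ2, ⟨Rp, Rt, hR, h1⟩, ⟨Rp, Rt, hR, h2⟩⟩
  c2c := fun ⟨Rp, Rt, hR, h⟩ hP =>
    let ⟨Q0, hQ0, h0⟩ := hR.c2c h hP
    ⟨Q0, hQ0, ⟨Rp, Rt, hR, h0⟩⟩
  c2d := fun ⟨Rp, Rt, hR, h⟩ hP hstep =>
    let ⟨Q1, Q2, hQ1, hQ2, h2⟩ := hR.c2d h hP hstep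
    ⟨Q1, Q2, hQ1, hQ2, ⟨Rp, Rt, hR, h2⟩⟩
  c2e := fun ⟨_, _, hR, h⟩ hP => hR.c2e h hP

theorem Bis.refl (P : C) : Bis Tr P P := ⟨_, _, cbrb_eq, rfl⟩

theorem Bis.symm {P Q : C} (h : Bis Tr P Q) : Bis Tr Q P := cbrb_bis.symm_p h

theorem Bis.trans (hsg : StronglyGuarded Tr) {P Q R : C} (h₁ : Bis Tr P Q) (h₂ : Bis Tr Q R) :
    Bis Tr P R :=
  ⟨_, _, cbrb_bis.comp_self hsg, Q, h₁, h₂⟩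

theorem mem_cls_self (P : C) : P ∈ cls Tr P := Bis.refl P

theorem cls_eq_of_bis (hsg : StronglyGuarded Tr) {P Q : C} (h : Bis Tr P Q) :
    cls Tr P = cls Tr Q :=
  Set.ext fun _ => ⟨h.symm.trans hsg, h.trans hsg⟩

namespace IsClass

variable {R R' : Set C}

theorem mem_of_bis (hsg : StronglyGuarded Tr) (hR : IsClass Tr R) {P Q : C} (hP : P ∈ R)
    (h : Bis Tr P Q) : Q ∈ R := by
  obtain ⟨W, rfl⟩ := hR
  exact Bis.trans hsg hP h

theorem bis_of_mem (hsg : StronglyGuarded Tr) (hR : IsClass Tr R) {P Q : C} (hP : P ∈ R)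
    (hQ : Q ∈ R) : Bis Tr P Q := by
  obtain ⟨W, rfl⟩ := hR
  exact Bis.trans hsg (Bis.symm hP) hQ

theorem eq_of_mem (hsg : StronglyGuarded Tr) (hR : IsClass Tr R) (hR' : IsClass Tr R') {P : C}
    (hP : P ∈ R) (hP' : P ∈ R') : R = R' := by
  obtain ⟨W, rfl⟩ := hR
  obtain ⟨W', rfl⟩ := hR'
  exact (cls_eq_of_bis hsg hP).trans (cls_eq_of_bis hsg hP').symm

end IsClass

variable (Tr) in
def HasClassStep (S : C) (R : Set C) (α : Act A) (R' : Set C) : Prop :=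
  ∃ P1 P2, TauPath Tr S P1 ∧ Tr P1 α P2 ∧ P1 ∈ R ∧ P2 ∈ R' ∧
    ((∃ a, α = Act.vis a) ∨ R ≠ R')

theorem clTr_iff_hasClassStep {χ : Set C → C} {R R' : Set C} {α : Act A} (hα : α ≠ Act.to) :
    ClTr Tr χ R α R' ↔ HasClassStep Tr (χ R) R α R' := by
  cases α
  · rfl
  · rfl
  · exact absurd rfl hα

theorem HasClassStep.of_bis (hsg : StronglyGuarded Tr) {R R' : Set C} (hR : IsClass Tr R)
    (hR' : IsClass Tr R') {α : Act A} (hα : α ≠ Act.to) {S T : C} (hST : Bis Tr S T)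
    (h : HasClassStep Tr S R α R') : HasClassStep Tr T R α R' := by
  obtain ⟨P1, P2, hP1, hstep, hP1R, hP2R', hexit⟩ := h
  obtain ⟨Q1, hQ1, h1⟩ := cbrb_bis.exists_tauPath_rp hST hP1
  obtain ⟨Q2, Q3, hQ2, hQ3, h2, h3⟩ := cbrb_bis.c1a h1 hα hstep
  rcases hQ3 with ⟨rfl, rfl⟩ | hQ3
  · -- `T` answers the tau-step by idling, so `P2 ~ P1` and the step does not leave `R`
    have hP2R : P2 ∈ R := hR.mem_of_bis hsg hP1R (h2.trans hsg h3.symm)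
    exact absurd (hR.eq_of_mem hsg hR' hP2R hP2R') (hexit.resolve_left nofun)
  · exact ⟨Q2, Q3, hQ1.trans hQ2, hQ3, hR.mem_of_bis hsg hP1R h2, hR'.mem_of_bis hsg hP2R' h3,
      hexit⟩

theorem not_hasClassStep_tau_of_stable (hsg : StronglyGuarded Tr) {R R' : Set C}
    (hR : IsClass Tr R) (hR' : IsClass Tr R') {P0 S : C} (hP0 : P0 ∈ R) (hst : Stable Tr P0) :
    ¬ HasClassStep Tr S R Act.tau R' := by
  rintro ⟨P1, P2, -, hstep, hP1R, hP2R', hexit⟩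
  have h : Bis Tr P2 P0 := cbrb_bis.rp_of_tau_of_stable (hR.bis_of_mem hsg hP1R hP0) hst hstep
  exact hexit.resolve_left nofun (hR.eq_of_mem hsg hR' (hR.mem_of_bis hsg hP0 h.symm) hP2R')

end

/-- Transition relations between equivalence-class states: for `α ∈ A ∪ {tau}`,
`[P] -α-> R'` iff there is a path `P ==> P1 -α-> P2` with `P1 ∈ [P]`, `P2 ∈ R'` and
(`α ∈ A` or `[P] ≠ R'`); and `[P]` has no tau-transition iff there is a path `P ==> P0`
with `P0 ∈ [P]` and `P0` having no tau-transition. -/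
theorem stmt17 {C A : Type} (Tr : C → Act A → C → Prop) (χ : Set C → C)
    (hsg : StronglyGuarded Tr)
    (hχ : ∀ R : Set C, IsClass Tr R → χ R ∈ R)
    (P : C) :
    (∀ (α : Act A) (R' : Set C), α ≠ Act.to → IsClass Tr R' →
      (ClTr Tr χ (cls Tr P) α R' ↔
        ∃ P1 P2, TauPath Tr P P1 ∧ Tr P1 α P2 ∧ P1 ∈ cls Tr P ∧ P2 ∈ R' ∧
          ((∃ a, α = Act.vis a) ∨ cls Tr P ≠ R'))) ∧
    ((¬ ∃ R' : Set C, IsClass Tr R' ∧ ClTr Tr χ (cls Tr P) Act.tau R') ↔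
      ∃ P0, TauPath Tr P P0 ∧ P0 ∈ cls Tr P ∧ Stable Tr P0) := by
  have hP : IsClass Tr (cls Tr P) := ⟨P, rfl⟩
  have hχP : Bis Tr P (χ (cls Tr P)) := hχ _ hP
  have clTr_iff : ∀ α R', α ≠ Act.to → IsClass Tr R' →
      (ClTr Tr χ (cls Tr P) α R' ↔ HasClassStep Tr P (cls Tr P) α R') := fun α R' hα hR' =>
    (clTr_iff_hasClassStep hα).trans
      ⟨.of_bis hsg hP hR' hα hχP.symm, .of_bis hsg hP hR' hα hχP⟩
  refine ⟨clTr_iff, fun hno => ?_, ?_⟩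
  · refine hsg.exists_tauPath_stable (fun Q hQ Q' hstep => ?_) (mem_cls_self P)
    by_contra hQ'
    have hexit : HasClassStep Tr Q (cls Tr P) Act.tau (cls Tr Q') :=
      ⟨Q, Q', .refl, hstep, hQ, mem_cls_self Q', .inr fun h => hQ' (h ▸ mem_cls_self Q')⟩
    exact hno ⟨cls Tr Q', ⟨Q', rfl⟩, (clTr_iff _ _ Act.tau_ne_to ⟨Q', rfl⟩).2
      (hexit.of_bis hsg hP ⟨Q', rfl⟩ Act.tau_ne_to (Bis.symm hQ))⟩
  · rintro ⟨P0, -, hP0, hst⟩ ⟨R', hR', hstep⟩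
    exact not_hasClassStep_tau_of_stable hsg hP hR' hP0 hst
      ((clTr_iff _ _ Act.tau_ne_to hR').1 hstep)
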